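/- arXiv:1901.01378 — 2 statements merged into one kernel-verified Lean document; each statement's English description precedes it below -/
import Mathlib

section
/- For each fixed positive definite matrix A, the function f(X) = tr(A # X) is strictly concave on the set of positive definite matrices: if tr(A # ((X+Y)/2)) = (tr(A # X) + tr(A # Y))/2 then X = Y. -/
open scoped ComplexOrder
open MeasureTheory

/-- The positive semidefinite square root of a matrix (zero if not positive semidefinite). -/
noncomputable def msqrt {N : ℕ} (A : Matrix (Fin N) (Fin N) ℂ) : Matrix (Fin N) (Fin N) ℂ :=
  by classical exact if h : A.PosSemidef then
    h.1.eigenvectorUnitary.1 * Matrix.diagonal ((↑) ∘ (√·) ∘ h.1.eigenvalues) *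
      (star h.1.eigenvectorUnitary : Matrix (Fin N) (Fin N) ℂ) else 0

/-- The Pusz–Woronowicz geometric mean `A # B = A^{1/2} (A^{-1/2} B A^{-1/2})^{1/2} A^{1/2}`. -/
noncomputable def geom {N : ℕ} (A B : Matrix (Fin N) (Fin N) ℂ) : Matrix (Fin N) (Fin N) ℂ :=
  msqrt A * msqrt ((msqrt A)⁻¹ * B * (msqrt A)⁻¹) * msqrt A

/-- The logarithm of a Hermitian matrix, via the spectral theorem (zero if not Hermitian). -/
noncomputable def mlog {N : ℕ} (A : Matrix (Fin N) (Fin N) ℂ) : Matrix (Fin N) (Fin N) ℂ :=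
  by classical exact if h : A.IsHermitian then h.cfc Real.log else 0

/-- The log Euclidean mean `exp((log A + log B)/2)`. -/
noncomputable def logEuclid {N : ℕ} (A B : Matrix (Fin N) (Fin N) ℂ) : Matrix (Fin N) (Fin N) ℂ :=
  NormedSpace.exp ((2:ℂ)⁻¹ • (mlog A + mlog B))

/-!
Put `B = A^{1/2}`, `Z = B⁻¹ X B⁻¹` and `W = B⁻¹ Y B⁻¹`, so that `A # X = B Z^{1/2} B`. Operator
concavity of the square root gives `(Z^{1/2} + W^{1/2})/2 ≤ ((Z + W)/2)^{1/2}`; after conjugating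
by the invertible `B`, the hypothesis says that this positive semidefinite gap has trace zero, so
it vanishes. Squaring the resulting equality yields `(Z^{1/2} - W^{1/2})^2 = 0`, hence `Z = W`
and `X = Y`.
-/

open Matrix
-- `L2Operator` supplies the C⋆-algebra structure that operator concavity of `CFC.sqrt` needs.
open scoped MatrixOrder Matrix.Norms.L2Operator

section CStarAlgebra

variable {A : Type*} [CStarAlgebra A] [PartialOrder A] [StarOrderedRing A]

lemma CFC.eq_of_sqrt_midpoint_eq {a b : A} (ha : 0 ≤ a) (hb : 0 ≤ b)
    (h : CFC.sqrt ((2 : ℝ)⁻¹ • (a + b)) = (2 : ℝ)⁻¹ • (CFC.sqrt a + CFC.sqrt b)) : a = b := by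
  set s := CFC.sqrt a
  set t := CFC.sqrt b
  have hs : s * s = a := CFC.sqrt_mul_sqrt_self a
  have ht : t * t = b := CFC.sqrt_mul_sqrt_self b
  have hsq : (2 : ℝ)⁻¹ • (s * s + t * t) = ((2 : ℝ)⁻¹ • (s + t)) * ((2 : ℝ)⁻¹ • (s + t)) := by
    rw [hs, ht, ← h, CFC.sqrt_mul_sqrt_self _ (smul_nonneg (by norm_num) (add_nonneg ha hb))]
  have hst : star (s - t) * (s - t) = 0 := by
    rw [smul_mul_smul, mul_add, add_mul, add_mul] at hsq
    rw [star_sub, (CFC.sqrt_nonneg a).isSelfAdjoint.star_eq,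
      (CFC.sqrt_nonneg b).isSelfAdjoint.star_eq, sub_mul, mul_sub, mul_sub]
    linear_combination (norm := module) (4 : ℝ) • hsq
  rw [← hs, ← ht, sub_eq_zero.mp ((CStarRing.star_mul_self_eq_zero_iff _).mp hst)]

end CStarAlgebra

lemma Matrix.eq_of_le_of_trace_conjTranspose_mul_mul_eq {n 𝕜 : Type*} [Fintype n]
    [DecidableEq n] [RCLike 𝕜] {B P Q : Matrix n n 𝕜} (hB : IsUnit B) (hPQ : P ≤ Q)
    (h : (Bᴴ * P * B).trace = (Bᴴ * Q * B).trace) : P = Q := by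
  have hpsd : (Bᴴ * (Q - P) * B).PosSemidef := (le_iff.mp hPQ).conjTranspose_mul_mul_same B
  have hzero : Bᴴ * (Q - P) * B = 0 := by
    refine hpsd.trace_eq_zero_iff.mp ?_
    rw [Matrix.mul_sub, Matrix.sub_mul, trace_sub, h, sub_self]
  have hBH : IsUnit Bᴴ := by simpa using hB.star
  rw [hB.mul_left_eq_zero, hBH.mul_right_eq_zero, sub_eq_zero] at hzero
  exact hzero.symm

lemma Matrix.eq_of_trace_conj_sqrt_midpoint_eq {n : Type*} [Fintype n] [DecidableEq n]
    {B Z W : Matrix n n ℂ} (hB : IsUnit B) (hZ : 0 ≤ Z) (hW : 0 ≤ W)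
    (h : (Bᴴ * CFC.sqrt ((2 : ℝ)⁻¹ • (Z + W)) * B).trace
        = ((Bᴴ * CFC.sqrt Z * B).trace + (Bᴴ * CFC.sqrt W * B).trace) / 2) :
    Z = W := by
  have hconcave : (2 : ℝ)⁻¹ • (CFC.sqrt Z + CFC.sqrt W) ≤ CFC.sqrt ((2 : ℝ)⁻¹ • (Z + W)) := by
    simpa only [smul_add] using
      CFC.concaveOn_sqrt.2 hZ hW (by norm_num) (by norm_num) (by norm_num)
  refine CFC.eq_of_sqrt_midpoint_eq hZ hW
    (eq_of_le_of_trace_conjTranspose_mul_mul_eq hB hconcave ?_).symm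
  rw [h, Matrix.mul_smul, Matrix.smul_mul, trace_smul, Matrix.mul_add, Matrix.add_mul, trace_add,
    Complex.real_smul]
  push_cast
  ring

lemma msqrt_eq_cfcSqrt {N : ℕ} {A : Matrix (Fin N) (Fin N) ℂ} (hA : A.PosSemidef) :
    msqrt A = CFC.sqrt A := by
  rw [msqrt, dif_pos hA, CFC.sqrt_eq_cfc, cfc_nnreal_eq_real _ A, hA.1.cfc_eq]
  simp only [IsHermitian.cfc, Unitary.conjStarAlgAut_apply]
  congr 3
  funext i
  simp [hA.eigenvalues_nonneg i]

lemma geom_eq_cfcSqrt {N : ℕ} {A X : Matrix (Fin N) (Fin N) ℂ} (hA : A.PosSemidef)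
    (hX : X.PosSemidef) :
    geom A X = CFC.sqrt A * CFC.sqrt ((CFC.sqrt A)⁻¹ * X * (CFC.sqrt A)⁻¹) * CFC.sqrt A := by
  have hconj : 0 ≤ (CFC.sqrt A)⁻¹ * X * (CFC.sqrt A)⁻¹ :=
    conjugate_nonneg_of_nonneg hX.nonneg (CFC.sqrt_nonneg A).posSemidef.inv.nonneg
  rw [geom, msqrt_eq_cfcSqrt hA, msqrt_eq_cfcSqrt hconj.posSemidef]

/-- For fixed positive definite `A`, `X ↦ tr(A # X)` is strictly concave on positive definite
matrices: midpoint equality of traces forces `X = Y`. -/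
theorem stmt12 {N : ℕ} (A X Y : Matrix (Fin N) (Fin N) ℂ)
    (hA : A.PosDef) (hX : X.PosDef) (hY : Y.PosDef)
    (h : (geom A ((2:ℂ)⁻¹ • (X + Y))).trace
        = ((geom A X).trace + (geom A Y).trace) / 2) :
    X = Y := by
  have hmid : (2:ℂ)⁻¹ • (X + Y) = (2:ℝ)⁻¹ • (X + Y) := by
    rw [← Complex.coe_smul]; push_cast; rfl
  rw [hmid, geom_eq_cfcSqrt hA.posSemidef hX.posSemidef,
    geom_eq_cfcSqrt hA.posSemidef hY.posSemidef,
    geom_eq_cfcSqrt hA.posSemidef ((hX.posSemidef.add hY.posSemidef).smul (by norm_num))] at h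
  set B := CFC.sqrt A
  have hB : IsUnit B := CFC.isUnit_sqrt_iff_isStrictlyPositive.2 hA.isStrictlyPositive
  have hBH : Bᴴ = B := (CFC.sqrt_nonneg A).posSemidef.1.eq
  have hconj {M : Matrix (Fin N) (Fin N) ℂ} (hM : M.PosSemidef) : 0 ≤ B⁻¹ * M * B⁻¹ :=
    conjugate_nonneg_of_nonneg hM.nonneg (CFC.sqrt_nonneg A).posSemidef.inv.nonneg
  set Z := B⁻¹ * X * B⁻¹
  set W := B⁻¹ * Y * B⁻¹
  have hmidZW : B⁻¹ * ((2:ℝ)⁻¹ • (X + Y)) * B⁻¹ = (2:ℝ)⁻¹ • (Z + W) := by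
    simp only [Matrix.mul_smul, Matrix.smul_mul, Matrix.mul_add, Matrix.add_mul, Z, W]
  rw [hmidZW] at h
  have hZW : Z = W := eq_of_trace_conj_sqrt_midpoint_eq hB (hconj hX.posSemidef)
    (hconj hY.posSemidef) (by rwa [hBH])
  have hBinv : IsUnit B⁻¹ := isUnit_nonsing_inv_iff.2 hB
  rwa [hBinv.mul_left_inj, hBinv.mul_right_inj] at hZW
end

section
/- If A, X, Y are positive definite matrices and A # ((X+Y)/2) = (A # X + A # Y)/2, then X = Y. -/
open scoped ComplexOrder
open MeasureTheory

/-! With `B = A^{1/2}`, `S = B⁻¹XB⁻¹` and `T = B⁻¹YB⁻¹`, the hypothesis says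
`√((S + T)/2) = (√S + √T)/2`. Squaring gives `(√S - √T)² = 2(S + T) - (√S + √T)² = 0`, and a
Hermitian matrix with zero square vanishes; hence `√S = √T`, so `S = T` and `X = Y`. -/

open Matrix

section msqrt

variable {n : ℕ} {M : Matrix (Fin n) (Fin n) ℂ}

lemma msqrt_eq_conjStarAlgAut (hM : M.PosSemidef) :
    msqrt M = Unitary.conjStarAlgAut ℂ _ hM.1.eigenvectorUnitary
      (diagonal ((↑) ∘ (√·) ∘ hM.1.eigenvalues)) := by
  rw [msqrt, dif_pos hM]; rfl

lemma msqrt_mul_msqrt (hM : M.PosSemidef) : msqrt M * msqrt M = M := by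
  rw [msqrt_eq_conjStarAlgAut hM, ← map_mul, diagonal_mul_diagonal]
  conv_rhs => rw [hM.1.spectral_theorem]
  congr with i
  simp [← Complex.ofReal_mul, Real.mul_self_sqrt (hM.eigenvalues_nonneg i)]

lemma isHermitian_msqrt (hM : M.PosSemidef) : (msqrt M).IsHermitian := by
  rw [msqrt_eq_conjStarAlgAut hM, IsHermitian, ← star_eq_conjTranspose, ← map_star,
    star_eq_conjTranspose, diagonal_conjTranspose]
  congr with i
  simp

lemma isUnit_msqrt (hM : M.PosDef) : IsUnit (msqrt M) := by
  rw [isUnit_iff_isUnit_det]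
  apply isUnit_of_mul_isUnit_left (y := (msqrt M).det)
  rw [← det_mul, msqrt_mul_msqrt hM.posSemidef, ← isUnit_iff_isUnit_det]
  exact hM.isUnit

end msqrt

lemma IsUnit.eq_of_mul_mul_eq {M : Type*} [Monoid M] {b x y : M} (hb : IsUnit b)
    (h : b * x * b = b * y * b) : x = y :=
  hb.mul_left_cancel (hb.mul_right_cancel h)

lemma Matrix.IsHermitian.eq_of_half_add_mul_self {n 𝕜 : Type*} [Fintype n] [RCLike 𝕜]
    {P Q : Matrix n n 𝕜} (hP : P.IsHermitian) (hQ : Q.IsHermitian)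
    (h : ((2:𝕜)⁻¹ • (P + Q)) * ((2:𝕜)⁻¹ • (P + Q)) = (2:𝕜)⁻¹ • (P * P + Q * Q)) : P = Q := by
  have hsq : (P - Q) * (P - Q) =
      (4:𝕜) • ((2:𝕜)⁻¹ • (P * P + Q * Q) - ((2:𝕜)⁻¹ • (P + Q)) * ((2:𝕜)⁻¹ • (P + Q))) := by
    simp only [mul_add, add_mul, sub_mul, mul_sub, smul_mul_smul_comm]
    module
  rw [h, sub_self, smul_zero] at hsq
  rw [← sub_eq_zero, ← conjTranspose_mul_self_eq_zero, (hP.sub hQ).eq, hsq]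

theorem stmt13 {N : ℕ} (A X Y : Matrix (Fin N) (Fin N) ℂ)
    (hA : A.PosDef) (hX : X.PosDef) (hY : Y.PosDef)
    (h : geom A ((2:ℂ)⁻¹ • (X + Y)) = (2:ℂ)⁻¹ • (geom A X + geom A Y)) :
    X = Y := by
  have hB : IsUnit (msqrt A) := isUnit_msqrt hA
  have hBinv : (msqrt A)⁻¹.IsHermitian := (isHermitian_msqrt hA.posSemidef).inv
  set B := msqrt A
  set S := B⁻¹ * X * B⁻¹
  set T := B⁻¹ * Y * B⁻¹
  have hS : S.PosSemidef := by
    simpa only [hBinv.eq] using hX.posSemidef.conjTranspose_mul_mul_same B⁻¹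
  have hT : T.PosSemidef := by
    simpa only [hBinv.eq] using hY.posSemidef.conjTranspose_mul_mul_same B⁻¹
  have hmid : msqrt ((2:ℂ)⁻¹ • (S + T)) = (2:ℂ)⁻¹ • (msqrt S + msqrt T) := by
    refine hB.eq_of_mul_mul_eq ?_
    simpa only [geom, Matrix.mul_smul, Matrix.smul_mul, smul_add, Matrix.mul_add, Matrix.add_mul]
      using h
  have hPQ : msqrt S = msqrt T := by
    refine (isHermitian_msqrt hS).eq_of_half_add_mul_self (isHermitian_msqrt hT) ?_
    rw [← hmid, msqrt_mul_msqrt ((hS.add hT).smul (inv_nonneg.mpr zero_le_two)),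
      msqrt_mul_msqrt hS, msqrt_mul_msqrt hT]
  have hST : S = T := by rw [← msqrt_mul_msqrt hS, ← msqrt_mul_msqrt hT, hPQ]
  exact (isUnit_nonsing_inv_iff.mpr hB).eq_of_mul_mul_eq hST
end
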